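/- arXiv:1112.5729 — 3 statements merged into one kernel-verified Lean document; each statement's English description precedes it below -/
import Mathlib

section
/- Let G be a monoid acting on a set X and let φ be a special filter on X with ⋂φ = {x_0}, and let τ_φ consist of all sets U⊆X such that for every g∈G with g•x_0∈U the preimage {x∈X : g•x∈U} belongs to φ. Then the pseudocharacter of τ_φ at x_0 equals the pseudocharacter of φ: the least cardinality of a family 𝒰 of τ_φ-open sets containing x_0 with ⋂𝒰 = {x_0} equals the least cardinality of a subfamily 𝓕⊆φ with ⋂𝓕 = {x_0}. -/
open Topology Cardinal

universe u

/-- An injective transfinite sequence `(x_α)_{α<κ}` of points of a `G`-act `X` is *special*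
(with least index `i₀`) if there is an enumeration `G = {g_α}_{α<κ}` of the monoid `G` such
that for all `α < κ` and all `β, γ, δ < α`:
(1) if `g_β • x_{i₀} ≠ g_γ • x_{i₀}` then `g_β • x_α ≠ g_γ • x_α`, and
(2) if `g_β • x_{i₀} ≠ g_γ • x_δ` then `g_β • x_α ≠ g_γ • x_δ`. -/
def IsSpecialSeq (G : Type u) {X : Type u} [Monoid G] [MulAction G X] (κ : Cardinal.{u})
    (x : κ.ord.ToType → X) (i₀ : κ.ord.ToType) : Prop :=
  (∀ i, i₀ ≤ i) ∧ Function.Injective x ∧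
  ∃ g : κ.ord.ToType → G, Function.Surjective g ∧
    ∀ α β γ δ : κ.ord.ToType, β < α → γ < α → δ < α →
      (g β • x i₀ ≠ g γ • x i₀ → g β • x α ≠ g γ • x α) ∧
      (g β • x i₀ ≠ g γ • x δ → g β • x α ≠ g γ • x δ)

/-- A filter `φ` on a `G`-act `X` is *special* (with `⋂ φ = {x₀}`) if for some cardinal `κ`
there is a special sequence `(x_α)_{α<κ}` in `X` with first term `x₀` such that
`⋂ φ = {x₀}` and `{x₀} ∪ {x_β : α < β < κ} ∈ φ` for all `α < κ`. -/
def IsSpecialFilter (G : Type u) {X : Type u} [Monoid G] [MulAction G X]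
    (φ : Filter X) (x₀ : X) : Prop :=
  ∃ (κ : Cardinal.{u}) (x : κ.ord.ToType → X) (i₀ : κ.ord.ToType),
    IsSpecialSeq G κ x i₀ ∧ x i₀ = x₀ ∧ ⋂₀ φ.sets = {x₀} ∧
    ∀ α : κ.ord.ToType, insert x₀ (x '' Set.Ioi α) ∈ φ

/-- The topology `τ_φ`. -/
def tauPhi (G X : Type*) [Monoid G] [MulAction G X] (x₀ : X) (φ : Filter X) :
    TopologicalSpace X where
  IsOpen U := ∀ g : G, g • x₀ ∈ U → {x : X | g • x ∈ U} ∈ φ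
  isOpen_univ := fun _ _ => Filter.univ_mem' fun _ => trivial
  isOpen_inter := fun U V hU hV g hg =>
    Filter.inter_mem (hU g hg.1) (hV g hg.2)
  isOpen_sUnion := fun S hS g hg => by
    obtain ⟨t, htS, hgt⟩ := hg
    exact Filter.mem_of_superset (hS t htS g hgt) fun x hx => ⟨t, htS, hx⟩

/-!
Every `τ_φ`-open neighbourhood of `x₀` lies in `φ` (act by `1`), which gives `ψ(φ) ≤ ψ(x₀, τ_φ)`.
Conversely, each `F ∈ φ` is replaced by the smallest set `U_F ∋ x₀` such that
`g_η • x₀ ∈ U_F` forces `g_η • x_β ∈ U_F` for all `β > η` with `x_β ∈ F`. It is `τ_φ`-open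
because the tails `{x₀} ∪ {x_β : β > η}` lie in `φ`. A point `y ≠ x₀` of `U_F` has a
representation `y = g_η • x_β` with `g_η • x₀ ≠ y`, and condition (2) of a special sequence
makes `β` depend on `y` only. Hence a point `y ≠ x₀` lying in every `U_F`, `F ∈ 𝓕`, gives
a point `x_β ≠ x₀` lying in every `F ∈ 𝓕`, so `⋂ U_F = {x₀}` whenever `⋂ 𝓕 = {x₀}`.
-/

theorem csInf_eq_csInf_of_subset_of_forall_exists_le {α : Type*}
    [ConditionallyCompleteLinearOrderBot α] {s t : Set α} (hst : s ⊆ t)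
    (h : ∀ b ∈ t, ∃ a ∈ s, a ≤ b) : sInf s = sInf t := by
  rcases t.eq_empty_or_nonempty with rfl | ht
  · rw [Set.subset_empty_iff.1 hst]
  refine le_antisymm (le_csInf ht fun b hb => ?_) (csInf_le_csInf' ?_ hst)
  · obtain ⟨a, ha, hab⟩ := h b hb
    exact (csInf_le' ha).trans hab
  · obtain ⟨a, ha, -⟩ := h _ ht.some_mem
    exact ⟨a, ha⟩

section MulAction

variable {G X : Type*} [Monoid G] [MulAction G X]

theorem mem_of_isOpen_tauPhi {φ : Filter X} {x₀ : X} {U : Set X}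
    (hU : IsOpen[tauPhi G X x₀ φ] U) (hx₀ : x₀ ∈ U) : U ∈ φ := by
  simpa using hU 1 (by simpa using hx₀)

variable {O : Type*}

inductive tailClosure [LT O] (g : O → G) (x : O → X) (x₀ : X) (F : Set X) : Set X
  | base : tailClosure g x x₀ F x₀
  | step {η β : O} : tailClosure g x x₀ F (g η • x₀) → η < β → x β ∈ F →
      tailClosure g x x₀ F (g η • x β)

theorem isOpen_tailClosure [Preorder O] {g : O → G} (hg : Function.Surjective g) {x : O → X}
    {x₀ : X} {φ : Filter X} (htail : ∀ η, insert x₀ (x '' Set.Ioi η) ∈ φ) {F : Set X}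
    (hF : F ∈ φ) : IsOpen[tauPhi G X x₀ φ] (tailClosure g x x₀ F) := by
  intro h hh
  obtain ⟨η, rfl⟩ := hg h
  refine Filter.mem_of_superset (Filter.inter_mem hF (htail η)) ?_
  rintro z ⟨hzF, rfl | ⟨β, hβ, rfl⟩⟩
  · exact hh
  · exact tailClosure.step hh hβ hzF

theorem exists_rep_of_mem_tailClosure [LT O] {g : O → G} {x : O → X} {x₀ : X} {F : Set X}
    {y : X} (hy : y ∈ tailClosure g x x₀ F) (hne : y ≠ x₀) :
    ∃ η β, η < β ∧ x β ∈ F ∧ g η • x β = y ∧ g η • x₀ ≠ y := by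
  induction hy with
  | base => exact absurd rfl hne
  | @step η β hη hlt hβ ih =>
    by_cases h : g η • x₀ = g η • x β
    · rw [← h] at hne ⊢
      exact ih hne
    · exact ⟨η, β, hlt, hβ, rfl, h⟩

section LinearOrder

variable [LinearOrder O] {g : O → G} {x : O → X} {x₀ : X}

theorem index_eq_of_smul_eq_smul
    (hsep : ∀ α β γ δ, β < α → γ < α → δ < α → g β • x₀ ≠ g γ • x δ → g β • x α ≠ g γ • x δ)
    {η β η' β' : O} (hη : η < β) (hη' : η' < β') (heq : g η • x β = g η' • x β')
    (hne : g η • x₀ ≠ g η • x β) (hne' : g η' • x₀ ≠ g η' • x β') : β = β' := by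
  have key : ∀ {η β η' β'}, η < β → η' < β' → β < β' → g η • x β = g η' • x β' →
      g η' • x₀ ≠ g η' • x β' → False := fun hη hη' hlt heq hne' =>
    hsep _ _ _ _ hη' (hη.trans hlt) hlt (by rwa [heq]) heq.symm
  rcases lt_trichotomy β β' with hlt | rfl | hlt
  · exact (key hη hη' hlt heq hne').elim
  · rfl
  · exact (key hη' hη hlt heq.symm hne).elim

theorem sInter_image_tailClosure
    (hsep : ∀ α β γ δ, β < α → γ < α → δ < α → g β • x₀ ≠ g γ • x δ → g β • x α ≠ g γ • x δ)
    {𝓕 : Set (Set X)} (h𝓕 : ⋂₀ 𝓕 = {x₀}) : ⋂₀ (tailClosure g x x₀ '' 𝓕) = {x₀} := by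
  refine Set.Subset.antisymm (fun y hy => ?_) ?_
  · by_contra hne
    obtain ⟨F₀, hF₀, -⟩ : ∃ F ∈ 𝓕, y ∉ F := by
      simpa [← h𝓕, Set.mem_sInter] using hne
    obtain ⟨η₀, β₀, hη₀, -, rfl, hne₀⟩ :=
      exists_rep_of_mem_tailClosure (hy _ ⟨F₀, hF₀, rfl⟩) hne
    have hmem : x β₀ ∈ ⋂₀ 𝓕 := fun F hF => by
      obtain ⟨η, β, hη, hβ, heq, hne'⟩ :=
        exists_rep_of_mem_tailClosure (hy _ ⟨F, hF, rfl⟩) hne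
      rwa [← index_eq_of_smul_eq_smul hsep hη hη₀ heq (heq ▸ hne') hne₀]
    rw [h𝓕, Set.mem_singleton_iff] at hmem
    exact hne₀ (hmem ▸ rfl)
  · rintro _ rfl
    rintro _ ⟨F, -, rfl⟩
    exact tailClosure.base

end LinearOrder

end MulAction

/-- If `φ` is a special filter on a `G`-act `X` with `⋂ φ = {x₀}`, then the
pseudocharacter of `τ_φ` at `x₀` equals the pseudocharacter of `φ`: the least cardinality
of a family `𝒰` of `τ_φ`-open sets containing `x₀` with `⋂ 𝒰 = {x₀}` equals the least
cardinality of a subfamily `𝓕 ⊆ φ` with `⋂ 𝓕 = {x₀}`. -/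
theorem tauPhi_pseudocharacter_eq_of_specialFilter {G X : Type u} [Monoid G] [MulAction G X]
    (φ : Filter X) (x₀ : X) (hφ : IsSpecialFilter G φ x₀) :
    sInf {c : Cardinal.{u} | ∃ 𝒰 : Set (Set X),
        (∀ U ∈ 𝒰, IsOpen[tauPhi G X x₀ φ] U ∧ x₀ ∈ U) ∧ ⋂₀ 𝒰 = {x₀} ∧ #𝒰 = c} =
      sInf {c : Cardinal.{u} | ∃ 𝓕 : Set (Set X),
        𝓕 ⊆ φ.sets ∧ ⋂₀ 𝓕 = {x₀} ∧ #𝓕 = c} := by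
  obtain ⟨κ, x, i₀, ⟨-, -, g, hg, hspec⟩, rfl, -, htail⟩ := hφ
  have hsep : ∀ α β γ δ, β < α → γ < α → δ < α →
      g β • x i₀ ≠ g γ • x δ → g β • x α ≠ g γ • x δ :=
    fun α β γ δ hβ hγ hδ => (hspec α β γ δ hβ hγ hδ).2
  apply csInf_eq_csInf_of_subset_of_forall_exists_le
  · rintro _ ⟨𝒰, h𝒰, h𝒰x₀, rfl⟩
    exact ⟨𝒰, fun U hU => mem_of_isOpen_tauPhi (h𝒰 U hU).1 (h𝒰 U hU).2, h𝒰x₀, rfl⟩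
  · rintro _ ⟨𝓕, h𝓕, h𝓕x₀, rfl⟩
    refine ⟨_, ⟨tailClosure g x (x i₀) '' 𝓕, ?_, sInter_image_tailClosure hsep h𝓕x₀, rfl⟩,
      mk_image_le⟩
    rintro _ ⟨F, hF, rfl⟩
    exact ⟨isOpen_tailClosure hg htail (h𝓕 hF), tailClosure.base⟩
end

section
/- Let G be a monoid acting on a set X, let x_0∈X, and let κ be an infinite cardinal such that the cardinality of G is at most κ and every family 𝒰 of ζ_G-open sets with ⋂𝒰 = {x_0} has cardinality at least κ (i.e., κ ≤ ψ(x_0, ζ_G)), where ζ_G is the Zariski G-topology. Then for every infinite cardinal λ ≤ cf(κ), the set of topologies τ on X that are normal G-topologies with pseudocharacter ψ(x_0,τ) = λ at the point x_0 has cardinality at least 2^(2^κ). -/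
open Topology Cardinal

universe u

/-- The Zariski `G`-topology on a `G`-act `X`. -/
def zariskiGTopology (G X : Type*) [Monoid G] [MulAction G X] : TopologicalSpace X :=
  TopologicalSpace.generateFrom
    ({S : Set X | ∃ f g : G, S = {x : X | f • x ≠ g • x}} ∪
     {S : Set X | ∃ (f : G) (c : X), S = {x : X | f • x ≠ c}})

/-!
Enumerate `G` along the initial ordinal of `κ` and choose, by transfinite recursion, points `t ζ`
in general position: as fewer than `κ` Zariski-open sets never cut `{x₀}` out, `t ζ` can avoid
every Zariski condition involving the short products available at stage `ζ` and the points
seen before. Then every point `m • t ζ ≠ m • x₀` has a unique stage and a unique parent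
`m • x₀`, so these points form a forest whose ranks grow away from the roots.

For a filter `F ≤ atTop` on the stages, let the neighbourhoods of `γ` be the cones of
descendants of `γ` through stages in a member of `F`. This is a T₁ `G`-topology. It is normal:
of two cones through a common point one contains the apex of the other, which lets one separate
disjoint closed sets by well-founded induction on the rank. Its pseudocharacter at `x₀` is the
least number of members of `F` with empty intersection, because `t ζ` lies in the basic cone of
`x₀` given by `B` exactly when `ζ ∈ B`. Distinct filters give distinct topologies. Combining the
tails, a `μ`-partition of the stages (which makes that number `μ` once `μ ≤ cf κ`) and Hausdorff's
independent family of size `2^κ` yields `2^(2^κ)` such filters.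
-/

open Set Filter
open scoped Pointwise

theorem exists_forall_image_Iio {α β : Type*} [Preorder α] [WellFoundedLT α]
    {P : α → Set β → β → Prop} (h : ∀ a (g : Iio a → β), ∃ b, P a (range g) b) :
    ∃ t : α → β, ∀ a, P a (t '' Iio a) (t a) := by
  choose F hF using h
  refine ⟨wellFounded_lt.fix fun a rec => F a fun b => rec b (mem_Iio.1 b.2), fun a => ?_⟩
  rw [WellFounded.fix_eq, image_eq_range]
  exact hF _ _

theorem mk_iUnion_finite_lt {α ι : Type u} {μ : Cardinal.{u}} (hμ : ℵ₀ ≤ μ) (hι : #ι < μ)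
    {s : ι → Set α} (hs : ∀ i, (s i).Finite) : #(⋃ i, s i) < μ := by
  rcases lt_or_ge #ι ℵ₀ with hfin | hinf
  · have : Finite ι := lt_aleph0_iff_finite.1 hfin
    exact (finite_iUnion hs).lt_aleph0.trans_le hμ
  · calc #(⋃ i, s i) ≤ #ι * ⨆ i, #(s i) := mk_iUnion_le s
      _ ≤ #ι * ℵ₀ := by gcongr; exact ciSup_le' fun i => (hs i).lt_aleph0.le
      _ = #ι := mul_aleph0_eq hinf
      _ < μ := hι

section Hull

variable {X : Type*} (W : X → Set X)

def hull (A : Set X) : Set X :=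
  {p | ∃ a ∈ A, Relation.ReflTransGen (fun γ p => p ∈ W γ) a p}

variable {W} {A : Set X} {γ p : X}

theorem subset_hull : A ⊆ hull W A := fun a ha => ⟨a, ha, .refl⟩

theorem mem_hull_of_mem (hγ : γ ∈ hull W A) (hp : p ∈ W γ) : p ∈ hull W A :=
  let ⟨a, ha, h⟩ := hγ; ⟨a, ha, h.tail hp⟩

theorem mem_or_exists_of_mem_hull (h : p ∈ hull W A) :
    p ∈ A ∨ ∃ γ ∈ hull W A, p ∈ W γ ∧ p ≠ γ := by
  obtain ⟨a, ha, h⟩ := h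
  induction h with
  | refl => exact Or.inl ha
  | @tail γ p hγ hp ih =>
    by_cases hpγ : p = γ
    · exact hpγ ▸ ih
    · exact Or.inr ⟨γ, ⟨a, ha, hγ⟩, hp, hpγ⟩

theorem disjoint_hull {α : Type*} [LT α] [WellFoundedLT α] (rank : X → α)
    (hrank : ∀ γ p, p ∈ W γ → p ≠ γ → rank γ < rank p)
    (hmerge : ∀ γ δ p, p ∈ W γ → p ∈ W δ → δ ∈ W γ ∨ γ ∈ W δ) {B : Set X}
    (hAB : Disjoint A B) (hA : ∀ γ ∉ A, Disjoint (W γ) A) (hB : ∀ γ ∉ B, Disjoint (W γ) B) :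
    Disjoint (hull W A) (hull W B) := by
  refine Set.disjoint_left.2 fun p => ?_
  induction p using (InvImage.wf rank wellFounded_lt).induction with | _ p ih
  intro hpA hpB
  rcases mem_or_exists_of_mem_hull hpA with hpA' | ⟨γ, hγ, hpγ, hne⟩ <;>
    rcases mem_or_exists_of_mem_hull hpB with hpB' | ⟨δ, hδ, hpδ, hne'⟩
  · exact Set.disjoint_left.1 hAB hpA' hpB'
  · have hδA : δ ∈ A := by_contra fun h => Set.disjoint_left.1 (hA δ h) hpδ hpA'
    exact ih δ (hrank δ p hpδ hne') (subset_hull hδA) hδ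
  · have hγB : γ ∈ B := by_contra fun h => Set.disjoint_left.1 (hB γ h) hpγ hpB'
    exact ih γ (hrank γ p hpγ hne) hγ (subset_hull hγB)
  · rcases hmerge γ δ p hpγ hpδ with h | h
    · exact ih δ (hrank δ p hpδ hne') (mem_hull_of_mem hγ h) hδ
    · exact ih γ (hrank γ p hpγ hne) hγ (mem_hull_of_mem hδ h)

end Hull

section Pseudocharacter

variable {X : Type u}

noncomputable def pseudocharacter (τ : TopologicalSpace X) (x : X) : Cardinal.{u} :=
  sInf {c | ∃ 𝒰 : Set (Set X), (∀ U ∈ 𝒰, IsOpen[τ] U ∧ x ∈ U) ∧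
    ⋂₀ 𝒰 = ⋂₀ {U | IsOpen[τ] U ∧ x ∈ U} ∧ #𝒰 = c}

theorem sInter_isOpen_mem_eq_singleton {τ : TopologicalSpace X} (hT1 : ∀ y : X, IsClosed[τ] {y})
    (x : X) : ⋂₀ {U | IsOpen[τ] U ∧ x ∈ U} = {x} := by
  refine Set.Subset.antisymm (fun p hp => by_contra fun hpx => ?_) fun p hp U hU => hp ▸ hU.2
  exact Set.mem_sInter.1 hp {p}ᶜ ⟨(hT1 p).isOpen_compl, Ne.symm hpx⟩ rfl

theorem pseudocharacter_eq {τ : TopologicalSpace X} {x : X} {μ : Cardinal.{u}}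
    (hT1 : ∀ y : X, IsClosed[τ] {y})
    (hle : ∀ 𝒰 : Set (Set X), (∀ U ∈ 𝒰, IsOpen[τ] U ∧ x ∈ U) → ⋂₀ 𝒰 = {x} → μ ≤ #𝒰)
    (hex : ∃ 𝒰 : Set (Set X), (∀ U ∈ 𝒰, IsOpen[τ] U ∧ x ∈ U) ∧ ⋂₀ 𝒰 = {x} ∧ #𝒰 ≤ μ) :
    pseudocharacter τ x = μ := by
  rw [pseudocharacter, sInter_isOpen_mem_eq_singleton hT1]
  obtain ⟨𝒰, hU, hinter, hcard⟩ := hex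
  have hmem : #𝒰 ∈ {c | ∃ 𝒱 : Set (Set X), (∀ U ∈ 𝒱, IsOpen[τ] U ∧ x ∈ U) ∧
      ⋂₀ 𝒱 = {x} ∧ #𝒱 = c} := ⟨𝒰, hU, hinter, rfl⟩
  refine le_antisymm ((csInf_le' hmem).trans hcard) (le_csInf ⟨_, hmem⟩ ?_)
  rintro c ⟨𝒱, hV, hinter', rfl⟩
  exact hle 𝒱 hV hinter'

end Pseudocharacter

namespace ZariskiGTopology

/-- The initial well-order of cardinality `κ`. -/
abbrev Stage (κ : Cardinal.{u}) : Type u := κ.ord.ToType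

section Stage

variable {κ : Cardinal.{u}}

theorem mk_stage (κ : Cardinal.{u}) : #(Stage κ) = κ := mk_ord_toType κ

theorem mk_Iio_stage_lt (ζ : Stage κ) : #(Iio ζ) < κ := by
  simpa using mk_Iio_lt ζ

theorem exists_ge_of_le_mk {s : Set (Stage κ)} (hs : κ ≤ #s) (β : Stage κ) : ∃ ζ ∈ s, β ≤ ζ := by
  by_contra! h
  exact (hs.trans (mk_le_mk_of_subset h)).not_gt (mk_Iio_stage_lt β)

theorem exists_forall_le_of_mk_lt_cof {ι : Type u} (hι : #ι < κ.ord.cof) (β : ι → Stage κ) :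
    ∃ b, ∀ i, β i ≤ b := by
  by_contra! h
  have hcof : IsCofinal (range β) := fun b => by
    obtain ⟨i, hi⟩ := h b
    exact ⟨β i, mem_range_self i, hi.le⟩
  have := (Order.cof_le hcof).trans mk_range_le
  rw [Ordinal.cof_toType] at this
  exact this.not_gt hι

theorem nonempty_stage (hκ : ℵ₀ ≤ κ) : Nonempty (Stage κ) :=
  mk_ne_zero_iff.1 (by rw [mk_stage]; exact (aleph0_pos.trans_le hκ).ne')

theorem infinite_stage (hκ : ℵ₀ ≤ κ) : Infinite (Stage κ) :=
  Cardinal.infinite_iff.2 (by rwa [mk_stage])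

noncomputable def budget (ζ : Stage κ) : ℕ∞ := (Iio ζ).encard

theorem budget_mono : Monotone (budget (κ := κ)) :=
  fun _ _ h => encard_le_encard (Iio_subset_Iio h)

theorem eventually_le_budget (hκ : ℵ₀ ≤ κ) (k : ℕ) :
    ∀ᶠ ζ : Stage κ in atTop, (k : ℕ∞) ≤ budget ζ := by
  have := infinite_stage hκ
  have : NoMaxOrder (Stage κ) := Cardinal.noMaxOrder hκ
  obtain ⟨s, hs⟩ := Infinite.exists_subset_card_eq (Stage κ) k
  obtain ⟨b, hb⟩ := s.finite_toSet.bddAbove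
  obtain ⟨β, hβ⟩ := exists_gt b
  refine eventually_atTop.2 ⟨β, fun ζ hζ => ?_⟩
  calc (k : ℕ∞) = (s : Set (Stage κ)).encard := by simp [hs]
    _ ≤ budget ζ := encard_le_encard fun x hx => (hb hx).trans_lt (hβ.trans_le hζ)

end Stage

section Words

variable {G : Type u} [Monoid G] {κ : Cardinal.{u}} (σ : G → Stage κ)

/-- Products of words in the letters enumerated before `ζ`, of length at most `budget ζ - k`. The
bound keeps this set finite at finite stages, which matters when `κ = ℵ₀`; the room `k` lets
`g • ·` prepend a letter (`mul_mem_shortProds`). -/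
def shortProds (k : ℕ) (ζ : Stage κ) : Set G :=
  {g | ∃ l : List G, (∀ h ∈ l, σ h < ζ) ∧ l.prod = g ∧ (l.length + k : ℕ∞) ≤ budget ζ}

variable {σ}

theorem shortProds_mono {k : ℕ} {ζ ζ' : Stage κ} (h : ζ ≤ ζ') :
    shortProds σ k ζ ⊆ shortProds σ k ζ' := by
  rintro g ⟨l, hl, rfl, hlen⟩
  exact ⟨l, fun x hx => (hl x hx).trans_le h, rfl, hlen.trans (budget_mono h)⟩

theorem shortProds_anti {k k' : ℕ} (hk : k ≤ k') {ζ : Stage κ} :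
    shortProds σ k' ζ ⊆ shortProds σ k ζ := by
  rintro g ⟨l, hl, rfl, hlen⟩
  exact ⟨l, hl, rfl, le_trans (by gcongr) hlen⟩

theorem one_mem_shortProds {k : ℕ} {ζ : Stage κ} (h : (k : ℕ∞) ≤ budget ζ) :
    (1 : G) ∈ shortProds σ k ζ :=
  ⟨[], by simp, rfl, by simpa using h⟩

theorem mul_mem_shortProds {k : ℕ} {ζ : Stage κ} {g m : G} (hg : σ g < ζ)
    (hm : m ∈ shortProds σ (k + 1) ζ) : g * m ∈ shortProds σ k ζ := by
  obtain ⟨l, hl, rfl, hlen⟩ := hm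
  refine ⟨g :: l, ?_, List.prod_cons, le_of_eq_of_le ?_ hlen⟩
  · simpa [hg] using hl
  · push_cast [List.length_cons]
    ring

theorem mk_shortProds_lt (hκ : ℵ₀ ≤ κ) (hσ : Function.Injective σ) (k : ℕ) (ζ : Stage κ) :
    #(shortProds σ k ζ) < κ := by
  set L : Set G := σ ⁻¹' Iio ζ
  set words : Set (List L) := {l | (l.length : ℕ∞) ≤ budget ζ}
  have hsub : shortProds σ k ζ ⊆ (fun l : List L => (l.map (↑)).prod) '' words := by
    rintro g ⟨l, hl, rfl, hlen⟩
    obtain ⟨l', rfl⟩ : l ∈ range (List.map ((↑) : L → G)) := by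
      rw [range_list_map_coe]; exact hl
    exact ⟨l', le_trans (by simp) hlen, rfl⟩
  refine (mk_le_mk_of_subset hsub).trans_lt (mk_image_le.trans_lt ?_)
  by_cases hfin : (Iio ζ).Finite
  · have : Finite L := (hfin.preimage hσ.injOn).to_subtype
    have hwords : words ⊆ {l | l.length ≤ (Iio ζ).ncard} := fun l (hl : _ ≤ (Iio ζ).encard) => by
      rw [← hfin.cast_ncard_eq] at hl
      exact_mod_cast hl
    exact ((List.finite_length_le _ _).subset hwords).lt_aleph0.trans_le hκ
  · have hL : #L ≤ #(Iio ζ) := mk_preimage_of_injective σ _ hσ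
    calc #words ≤ #(List L) := mk_set_le _
      _ ≤ max ℵ₀ #L := mk_list_le_max _
      _ ≤ #(Iio ζ) := max_le (Cardinal.infinite_iff.1 (infinite_coe_iff.2 hfin)) hL
      _ < κ := mk_Iio_stage_lt ζ

end Words

section Generic

variable {G X : Type u} [Monoid G] [MulAction G X] {x₀ : X} {κ : Cardinal.{u}}

/-- `p` avoids every Zariski-closed condition over `M` and `P` that `x₀` avoids. -/
def IsGenericOver (x₀ : X) (M : Set G) (P : Set X) (p : X) : Prop :=
  p ≠ x₀ ∧ (∀ g₁ ∈ M, ∀ g₂ ∈ M, g₁ • x₀ ≠ g₂ • x₀ → g₁ • p ≠ g₂ • p) ∧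
    ∀ g ∈ M, ∀ c ∈ P, c ≠ g • x₀ → g • p ≠ c

theorem exists_isGenericOver (hκ : ℵ₀ ≤ κ)
    (hψ : ∀ 𝒰 : Set (Set X), (∀ U ∈ 𝒰, IsOpen[zariskiGTopology G X] U) → ⋂₀ 𝒰 = {x₀} → κ ≤ #𝒰)
    {M : Set G} {P : Set X} (hM : #M < κ) (hP : #P < κ) : ∃ p, IsGenericOver x₀ M P p := by
  set 𝒱 : Set (Set X) := (image2 (fun g₁ g₂ : G => {x | g₁ • x ≠ g₂ • x}) M M ∪
    image2 (fun (g : G) c => {x | g • x ≠ c}) M P) ∩ {V | x₀ ∈ V}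
  have hopen : ∀ V ∈ 𝒱, IsOpen[zariskiGTopology G X] V := by
    rintro V ⟨⟨g₁, -, g₂, -, rfl⟩ | ⟨g, -, c, -, rfl⟩, -⟩
    · exact TopologicalSpace.isOpen_generateFrom_of_mem (Or.inl ⟨g₁, g₂, rfl⟩)
    · exact TopologicalSpace.isOpen_generateFrom_of_mem (Or.inr ⟨g, c, rfl⟩)
  have hcard : #𝒱 < κ :=
    (mk_le_mk_of_subset inter_subset_left).trans_lt <| (mk_union_le _ _).trans_lt <|
      add_lt_of_lt hκ (mk_image2_le.trans_lt (mul_lt_of_lt hκ hM hM))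
        (mk_image2_le.trans_lt (mul_lt_of_lt hκ hM hP))
  obtain ⟨p, hp, hne⟩ : ∃ p ∈ ⋂₀ 𝒱, p ≠ x₀ := by
    by_contra! h
    exact (hψ 𝒱 hopen (eq_singleton_iff_unique_mem.2 ⟨fun V hV => hV.2, h⟩)).not_gt hcard
  exact ⟨p, hne, fun g₁ hg₁ g₂ hg₂ h => hp _ ⟨Or.inl ⟨g₁, hg₁, g₂, hg₂, rfl⟩, h⟩,
    fun g hg c hc h => hp _ ⟨Or.inr ⟨g, hg, c, hc, rfl⟩, h.symm⟩⟩

variable (G x₀ κ) in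
structure GenericSeq where
  σ : G → Stage κ
  σ_injective : Function.Injective σ
  t : Stage κ → X
  isGenericOver (ζ : Stage κ) :
    IsGenericOver x₀ (shortProds σ 0 ζ) (shortProds σ 0 ζ • insert x₀ (t '' Iio ζ)) (t ζ)

theorem GenericSeq.nonempty (hκ : ℵ₀ ≤ κ) (hG : #G ≤ κ)
    (hψ : ∀ 𝒰 : Set (Set X), (∀ U ∈ 𝒰, IsOpen[zariskiGTopology G X] U) → ⋂₀ 𝒰 = {x₀} → κ ≤ #𝒰) :
    Nonempty (GenericSeq G x₀ κ) := by
  obtain ⟨σ⟩ : Nonempty (G ↪ Stage κ) := (le_def _ _).1 (by rwa [mk_stage])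
  obtain ⟨t, ht⟩ := exists_forall_image_Iio (P := fun ζ s p =>
      IsGenericOver x₀ (shortProds σ 0 ζ) (shortProds σ 0 ζ • insert x₀ s) p) fun ζ g => by
    have hM := mk_shortProds_lt hκ σ.injective 0 ζ
    refine exists_isGenericOver hκ hψ hM ?_
    rw [← image2_smul]
    refine mk_image2_le.trans_lt (mul_lt_of_lt hκ hM (mk_insert_le.trans_lt ?_))
    exact add_lt_of_lt hκ (mk_range_le.trans_lt (mk_Iio_stage_lt ζ)) (one_lt_aleph0.trans_le hκ)
  exact ⟨⟨σ, σ.injective, t, ht⟩⟩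

end Generic

namespace GenericSeq

variable {G X : Type u} [Monoid G] [MulAction G X] {x₀ : X} {κ : Cardinal.{u}}
  (C : GenericSeq G x₀ κ) {B B' : Set (Stage κ)} {k k' : ℕ} {m m' g : G} {ζ ζ' : Stage κ}
  {p γ δ : X}

theorem t_ne (ζ : Stage κ) : C.t ζ ≠ x₀ := (C.isGenericOver ζ).1

theorem smul_t_ne_of_lt (hm : m ∈ shortProds C.σ 0 ζ) (hm' : m' ∈ shortProds C.σ 0 ζ)
    (hζ : ζ' < ζ) (hne : m' • C.t ζ' ≠ m • x₀) : m • C.t ζ ≠ m' • C.t ζ' :=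
  (C.isGenericOver ζ).2.2 m hm _ (smul_mem_smul hm' (mem_insert_of_mem _ ⟨ζ', hζ, rfl⟩)) hne

theorem smul_t_ne_smul_x₀ (hm : m ∈ shortProds C.σ 0 ζ) (hm' : m' ∈ shortProds C.σ 0 ζ)
    (hne : m' • x₀ ≠ m • x₀) : m • C.t ζ ≠ m' • x₀ :=
  (C.isGenericOver ζ).2.2 m hm _ (smul_mem_smul hm' (mem_insert _ _)) hne

def IsRep (k : ℕ) (m : G) (ζ : Stage κ) (p : X) : Prop :=
  m ∈ shortProds C.σ k ζ ∧ m • C.t ζ = p ∧ m • x₀ ≠ p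

variable {C}

theorem IsRep.mono (hk : k' ≤ k) (h : C.IsRep k m ζ p) : C.IsRep k' m ζ p :=
  ⟨shortProds_anti hk h.1, h.2⟩

theorem IsRep.le_stage (h : C.IsRep k m ζ p) (h' : C.IsRep k' m' ζ' p) : ζ ≤ ζ' := by
  by_contra! hlt
  have hm' := shortProds_mono hlt.le (h'.mono k'.zero_le).1
  exact C.smul_t_ne_of_lt (h.mono k.zero_le).1 hm' hlt (h'.2.1 ▸ h.2.2.symm)
    (h.2.1.trans h'.2.1.symm)

theorem IsRep.unique (h : C.IsRep k m ζ p) (h' : C.IsRep k' m' ζ' p) :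
    ζ = ζ' ∧ m • x₀ = m' • x₀ := by
  obtain rfl := (h.le_stage h').antisymm (h'.le_stage h)
  refine ⟨rfl, not_not.1 fun hne => ?_⟩
  exact (C.isGenericOver ζ).2.1 m (h.mono k.zero_le).1 m' (h'.mono k'.zero_le).1 hne
    (h.2.1.trans h'.2.1.symm)

theorem isRep_one_t (hk : (k : ℕ∞) ≤ budget ζ) : C.IsRep k 1 ζ (C.t ζ) :=
  ⟨one_mem_shortProds hk, one_smul _ _, by rw [one_smul]; exact (C.t_ne ζ).symm⟩

variable (C) in
open scoped Classical in
/-- The stage of the (unique) representation of `p`, or `⊥` if there is none. -/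
noncomputable def rank (p : X) : WithBot (Stage κ) :=
  if h : ∃ q : G × Stage κ, C.IsRep 0 q.1 q.2 p then h.choose.2 else ⊥

theorem IsRep.rank_eq (h : C.IsRep k m ζ p) : C.rank p = ζ := by
  have hex : ∃ q : G × Stage κ, C.IsRep 0 q.1 q.2 p := ⟨(m, ζ), h.mono k.zero_le⟩
  rw [rank, dif_pos hex, (hex.choose_spec.unique h).1]

theorem IsRep.rank_smul_x₀_lt (h : C.IsRep k m ζ p) : C.rank (m • x₀) < ζ := by
  by_cases hex : ∃ q : G × Stage κ, C.IsRep 0 q.1 q.2 (m • x₀)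
  · obtain ⟨⟨m', ζ'⟩, h'⟩ := hex
    rw [h'.rank_eq, WithBot.coe_lt_coe]
    by_contra! hle
    exact C.smul_t_ne_smul_x₀ h'.1 (shortProds_mono hle (h.mono k.zero_le).1) h'.2.2.symm h'.2.1
  · rw [rank, dif_neg hex]
    exact WithBot.bot_lt_coe ζ

variable (C) in
def Step (B : Set (Stage κ)) (k : ℕ) (a b : X) : Prop :=
  ∃ m, ∃ ζ ∈ B, C.IsRep k m ζ b ∧ m • x₀ = a

variable (C) in
def cone (B : Set (Stage κ)) (k : ℕ) (γ : X) : Set X :=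
  {p | Relation.ReflTransGen (C.Step B k) γ p}

theorem mem_cone_self : γ ∈ C.cone B k γ := Relation.ReflTransGen.refl

theorem cone_mono (hB : B ⊆ B') (hk : k' ≤ k) : C.cone B k γ ⊆ C.cone B' k' γ :=
  fun _ => Relation.ReflTransGen.mono
    (fun _ _ ⟨m, ζ, hζ, h, ha⟩ => ⟨m, ζ, hB hζ, h.mono hk, ha⟩ : C.Step B k ≤ C.Step B' k') _ _

theorem cone_subset_cone (h : δ ∈ C.cone B k γ) : C.cone B k δ ⊆ C.cone B k γ :=
  fun _ hp => Relation.ReflTransGen.trans h hp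

theorem exists_isRep_of_mem_cone (h : p ∈ C.cone B k γ) (hne : p ≠ γ) :
    ∃ m, ∃ ζ ∈ B, C.IsRep k m ζ p := by
  obtain rfl | ⟨_, -, m, ζ, hζ, hrep, -⟩ := Relation.ReflTransGen.cases_tail h
  · exact absurd rfl hne
  · exact ⟨m, ζ, hζ, hrep⟩

theorem rank_lt_of_mem_cone (h : p ∈ C.cone B k γ) : p ≠ γ → C.rank γ < C.rank p := by
  induction h with
  | refl => exact fun hne => absurd rfl hne
  | @tail q p _ hstep ih =>
    obtain ⟨m, ζ, -, hrep, rfl⟩ := hstep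
    have hlt : C.rank (m • x₀) < C.rank p := hrep.rank_eq ▸ hrep.rank_smul_x₀_lt
    intro _
    by_cases hq : m • x₀ = γ
    · exact hq ▸ hlt
    · exact (ih hq).trans hlt

theorem Step.left_unique {a a' b : X} (h : C.Step B k a b) (h' : C.Step B' k' a' b) : a = a' := by
  obtain ⟨m, ζ, -, hrep, rfl⟩ := h
  obtain ⟨m', ζ', -, hrep', rfl⟩ := h'
  exact (hrep.unique hrep').2

/-- Parents are unique (`Step.left_unique`), so the ancestries of a common point agree. -/
theorem cone_merge {B₁ B₂ : Set (Stage κ)} {k₁ k₂ : ℕ} (h₁ : p ∈ C.cone B₁ k₁ γ)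
    (h₂ : p ∈ C.cone B₂ k₂ δ) : δ ∈ C.cone B₁ k₁ γ ∨ γ ∈ C.cone B₂ k₂ δ := by
  induction h₁ with
  | refl => exact Or.inr h₂
  | @tail q p hγq hqp ih =>
    obtain rfl | ⟨q', hδq', hq'p⟩ := Relation.ReflTransGen.cases_tail h₂
    · exact Or.inl (hγq.tail hqp)
    · exact ih ((hq'p.left_unique hqp) ▸ hδq')

theorem t_mem_cone_x₀_iff (hk : (k : ℕ∞) ≤ budget ζ) : C.t ζ ∈ C.cone B k x₀ ↔ ζ ∈ B := by
  refine ⟨fun h => ?_, fun hζ => .single ⟨1, ζ, hζ, isRep_one_t hk, one_smul _ _⟩⟩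
  obtain ⟨m, ζ', hζ', hrep⟩ := C.exists_isRep_of_mem_cone h (C.t_ne ζ)
  rwa [((isRep_one_t hk).unique hrep).1]

theorem smul_mem_cone (h : p ∈ C.cone (B ∩ Ioi (C.σ g)) (k + 1) γ) :
    g • p ∈ C.cone B k (g • γ) := by
  induction h with
  | refl => exact mem_cone_self
  | @tail q p _ hstep ih =>
    obtain ⟨m, ζ, ⟨hζ, hgζ⟩, hrep, rfl⟩ := hstep
    by_cases heq : g • p = g • m • x₀
    · exact heq ▸ ih
    refine ih.tail ⟨g * m, ζ, hζ, ⟨mul_mem_shortProds hgζ hrep.1, ?_, ?_⟩, mul_smul _ _ _⟩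
    · rw [mul_smul, hrep.2.1]
    · rw [mul_smul]; exact Ne.symm heq

variable (C) in
/-- The topology in which the cones `C.cone B k γ`, `B ∈ F`, form a neighbourhood base at `γ`. -/
@[reducible] def topology (F : Filter (Stage κ)) : TopologicalSpace X where
  IsOpen U := ∀ γ ∈ U, ∃ B ∈ F, ∃ k, C.cone B k γ ⊆ U
  isOpen_univ _ _ := ⟨univ, univ_mem, 0, subset_univ _⟩
  isOpen_inter U V hU hV γ hγ := by
    obtain ⟨B₁, hB₁, k₁, h₁⟩ := hU γ hγ.1
    obtain ⟨B₂, hB₂, k₂, h₂⟩ := hV γ hγ.2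
    refine ⟨B₁ ∩ B₂, inter_mem hB₁ hB₂, max k₁ k₂, subset_inter ?_ ?_⟩
    · exact (cone_mono inter_subset_left (le_max_left _ _)).trans h₁
    · exact (cone_mono inter_subset_right (le_max_right _ _)).trans h₂
  isOpen_sUnion 𝒮 h := by
    rintro γ ⟨U, hU, hγ⟩
    obtain ⟨B, hB, k, hsub⟩ := h U hU γ hγ
    exact ⟨B, hB, k, hsub.trans (subset_sUnion_of_mem hU)⟩

variable {F F' : Filter (Stage κ)}

theorem isOpen_cone (hB : B ∈ F) : IsOpen[C.topology F] (C.cone B k γ) :=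
  fun _ hδ => ⟨B, hB, k, cone_subset_cone hδ⟩

theorem continuous_smul (hκ : ℵ₀ ≤ κ) (hF : F ≤ atTop) (g : G) :
    Continuous[C.topology F, C.topology F] (g • ·) := by
  have : NoMaxOrder (Stage κ) := Cardinal.noMaxOrder hκ
  refine @Continuous.mk X X (C.topology F) (C.topology F) _ fun U hU p hp => ?_
  obtain ⟨B, hB, k, hsub⟩ := hU _ hp
  exact ⟨B ∩ Ioi (C.σ g), inter_mem hB (hF (Ioi_mem_atTop _)), k + 1,
    fun q hq => hsub (C.smul_mem_cone hq)⟩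

theorem isClosed_singleton (hκ : ℵ₀ ≤ κ) (hF : F ≤ atTop) (y : X) :
    IsClosed[C.topology F] {y} := by
  have : NoMaxOrder (Stage κ) := Cardinal.noMaxOrder hκ
  have hrank : {ζ : Stage κ | C.rank y < ζ} ∈ atTop := by
    cases C.rank y with
    | bot => simp
    | coe ζ₀ => exact mem_of_superset (Ioi_mem_atTop ζ₀) fun ζ hζ => WithBot.coe_lt_coe.2 hζ
  refine @IsClosed.mk X (C.topology F) _ fun γ (hγ : γ ≠ y) =>
    ⟨_, hF hrank, 0, fun p hp (hpy : p = y) => ?_⟩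
  subst hpy
  obtain ⟨m, ζ, hζ, hrep⟩ := C.exists_isRep_of_mem_cone hp hγ.symm
  have hlt : C.rank p < ζ := hζ
  exact (hrep.rank_eq ▸ hlt).false

theorem exists_cone_disjoint {A : Set X} (hA : IsClosed[C.topology F] A) (γ : X) :
    ∃ B ∈ F, ∃ k, γ ∉ A → Disjoint (C.cone B k γ) A := by
  by_cases hγ : γ ∈ A
  · exact ⟨univ, univ_mem, 0, absurd hγ⟩
  · obtain ⟨B, hB, k, h⟩ := hA.isOpen_compl γ hγ
    exact ⟨B, hB, k, fun _ => subset_compl_iff_disjoint_right.1 h⟩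

theorem normal {A A' : Set X} (hA : IsClosed[C.topology F] A) (hA' : IsClosed[C.topology F] A')
    (hAA' : Disjoint A A') : ∃ U V : Set X, IsOpen[C.topology F] U ∧ IsOpen[C.topology F] V ∧
      A ⊆ U ∧ A' ⊆ V ∧ Disjoint U V := by
  choose B hB k hk using C.exists_cone_disjoint hA
  choose B' hB' k' hk' using C.exists_cone_disjoint hA'
  set W : X → Set X := fun γ => C.cone (B γ ∩ B' γ) (max (k γ) (k' γ)) γ
  have hWA (γ) (hγ : γ ∉ A) : Disjoint (W γ) A :=
    (hk γ hγ).mono_left (cone_mono inter_subset_left (le_max_left _ _))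
  have hWA' (γ) (hγ : γ ∉ A') : Disjoint (W γ) A' :=
    (hk' γ hγ).mono_left (cone_mono inter_subset_right (le_max_right _ _))
  have hopen (S : Set X) : IsOpen[C.topology F] (hull W S) := fun γ hγ =>
    ⟨_, inter_mem (hB γ) (hB' γ), _, fun _ hp => mem_hull_of_mem hγ hp⟩
  refine ⟨hull W A, hull W A', hopen A, hopen A', subset_hull, subset_hull, ?_⟩
  exact disjoint_hull C.rank (fun _ _ => C.rank_lt_of_mem_cone) (fun _ _ _ => C.cone_merge)
    hAA' hWA hWA'

theorem le_mk_of_sInter_eq (hκ : ℵ₀ ≤ κ) (hF : F ≤ atTop) {μ : Cardinal.{u}}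
    (hF_inter : ∀ (ι : Type u) (B : ι → Set (Stage κ)), #ι < μ → (∀ i, B i ∈ F) →
      (⋂ i, B i).Nonempty)
    {𝒰 : Set (Set X)} (h𝒰 : ∀ U ∈ 𝒰, IsOpen[C.topology F] U ∧ x₀ ∈ U) (hinter : ⋂₀ 𝒰 = {x₀}) :
    μ ≤ #𝒰 := by
  by_contra! hlt
  choose B hB k hk using fun U : 𝒰 => (h𝒰 U U.2).1 x₀ (h𝒰 U U.2).2
  obtain ⟨ζ, hζ⟩ := hF_inter 𝒰 (fun U => B U ∩ {ζ | (k U : ℕ∞) ≤ budget ζ}) hlt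
    fun U => inter_mem (hB U) (hF (eventually_le_budget hκ _))
  have hmem : C.t ζ ∈ ⋂₀ 𝒰 := fun U hU => by
    obtain ⟨hζB, hζk⟩ := mem_iInter.1 hζ ⟨U, hU⟩
    exact hk ⟨U, hU⟩ ((C.t_mem_cone_x₀_iff hζk).2 hζB)
  rw [hinter] at hmem
  exact C.t_ne ζ hmem

theorem exists_sInter_eq {ι : Type u} [Nonempty ι] {B : ι → Set (Stage κ)} (hB : ∀ i, B i ∈ F)
    (hinter : ⋂ i, B i = ∅) : ∃ 𝒰 : Set (Set X),
      (∀ U ∈ 𝒰, IsOpen[C.topology F] U ∧ x₀ ∈ U) ∧ ⋂₀ 𝒰 = {x₀} ∧ #𝒰 ≤ #ι := by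
  refine ⟨range fun i => C.cone (B i) 0 x₀, ?_, ?_, mk_range_le⟩
  · rintro _ ⟨i, rfl⟩
    exact ⟨C.isOpen_cone (hB i), mem_cone_self⟩
  refine Set.Subset.antisymm (fun p hp => by_contra fun hne => ?_) ?_
  · have hrank (i) : ∃ ζ ∈ B i, C.rank p = ζ := by
      obtain ⟨m, ζ, hζ, hrep⟩ := C.exists_isRep_of_mem_cone (hp _ ⟨i, rfl⟩) hne
      exact ⟨ζ, hζ, hrep.rank_eq⟩
    obtain ⟨ζ, -, hζ⟩ := hrank (Classical.arbitrary ι)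
    refine (hinter ▸ mem_iInter.2 fun i => ?_ : ζ ∈ (∅ : Set (Stage κ)))
    obtain ⟨ζ', hζ', hζ'eq⟩ := hrank i
    rwa [WithBot.coe_injective (hζ.symm.trans hζ'eq)]
  · rintro _ rfl _ ⟨i, rfl⟩
    exact mem_cone_self

theorem le_of_topology_eq (hκ : ℵ₀ ≤ κ) (hF' : F' ≤ atTop) (h : C.topology F = C.topology F') :
    F' ≤ F := by
  intro B hB
  have hopen : IsOpen[C.topology F'] (C.cone B 0 x₀) := h ▸ C.isOpen_cone hB
  obtain ⟨B', hB', k, hsub⟩ := hopen x₀ mem_cone_self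
  refine mem_of_superset (inter_mem hB' (hF' (eventually_le_budget hκ k))) fun ζ ⟨hζ, hk⟩ => ?_
  exact (C.t_mem_cone_x₀_iff (by simp)).1 (hsub ((C.t_mem_cone_x₀_iff hk).2 hζ))

theorem topology_injOn (hκ : ℵ₀ ≤ κ) : InjOn C.topology {F | F ≤ atTop} :=
  fun _ hF _ hF' h => le_antisymm (C.le_of_topology_eq hκ hF h.symm) (C.le_of_topology_eq hκ hF' h)

end GenericSeq

section Independent

variable {α : Type u}

abbrev Config (α : Type u) : Type u := Finset α × Finset (Finset α)

/-- Hausdorff's independent family: `(F, 𝔽) ∈ indepSet S` iff `F ∩ S ∈ 𝔽`. -/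
def indepSet (S : Set α) : Set (Config α) := {y | ∃ s ∈ y.2, (s : Set α) = ↑y.1 ∩ S}

theorem empty_mem_indepSet (S : Set α) : ((∅, {∅}) : Config α) ∈ indepSet S :=
  ⟨∅, Finset.mem_singleton_self _, by simp⟩

theorem exists_mem_indepSet_notMem {𝒮 : Set (Set α)} (h𝒮 : 𝒮.Finite) {S : Set α} (hS : S ∉ 𝒮) :
    ∃ y, (∀ S' ∈ 𝒮, y ∈ indepSet S') ∧ y ∉ indepSet S := by
  classical
  have : Fintype 𝒮 := h𝒮.fintype
  choose b hb using fun S' : 𝒮 => symmDiff_nonempty.2 fun h : (S' : Set α) = S => hS (h ▸ S'.2)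
  set F : Finset α := Finset.univ.image b
  refine ⟨(F, Finset.univ.image fun S' : 𝒮 => F.filter (· ∈ (S' : Set α))),
    fun S' hS' => ⟨_, Finset.mem_image_of_mem _ (Finset.mem_univ ⟨S', hS'⟩), by ext; simp⟩, ?_⟩
  rintro ⟨_, hs, heq⟩
  obtain ⟨S', -, rfl⟩ := Finset.mem_image.1 hs
  have hbF : b S' ∈ F := Finset.mem_image_of_mem _ (Finset.mem_univ _)
  have hiff : b S' ∈ (S' : Set α) ↔ b S' ∈ S := by
    simpa [hbF] using congrArg (b S' ∈ ·) heq
  exact (mem_symmDiff.1 (hb S')).elim (fun h => h.2 (hiff.1 h.1)) fun h => h.2 (hiff.2 h.1)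

theorem indepSet_mem_generate_iff {f : Set (Set α)} {S : Set α} :
    indepSet S ∈ generate (indepSet '' f) ↔ S ∈ f := by
  refine ⟨fun h => by_contra fun hS => ?_, fun hS => mem_generate_of_mem (mem_image_of_mem _ hS)⟩
  obtain ⟨𝒮, h𝒮f, h𝒮, hsub⟩ := exists_subset_image_finite_and.1 (mem_generate_iff.1 h)
  obtain ⟨y, hy, hyS⟩ := exists_mem_indepSet_notMem h𝒮 fun h => hS (h𝒮f h)
  exact hyS (hsub (by rintro _ ⟨S', hS', rfl⟩; exact hy S' hS'))

theorem mk_config [Infinite α] : #(Config α) = #α := by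
  rw [Config, mk_prod, lift_id, lift_id, mk_finset_of_infinite, mk_finset_of_infinite,
    mk_finset_of_infinite, mul_eq_self (Cardinal.infinite_iff.1 ‹_›)]

end Independent

section StageFilter

variable {κ μ : Cardinal.{u}}

theorem exists_stage_equiv (hκ : ℵ₀ ≤ κ) (hμ : ℵ₀ ≤ μ) (hμκ : μ ≤ κ) :
    Nonempty (Stage κ ≃ μ.out × Config κ.out × κ.out) := by
  have : Infinite κ.out := Cardinal.infinite_iff.2 (by rwa [mk_out])
  refine Cardinal.eq.1 ?_
  rw [mk_stage, mk_prod, mk_prod, lift_id, lift_id, lift_id, lift_id, mk_config, mk_out, mk_out,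
    mul_eq_self hκ, mul_eq_max hμ hκ, max_eq_right hμκ]

variable (e : Stage κ ≃ μ.out × Config κ.out × κ.out)

noncomputable def stageFilter (f : Set (Set κ.out)) : Filter (Stage κ) :=
  atTop ⊓ comap (fun ζ => (e ζ).1) cofinite ⊓ comap (fun ζ => (e ζ).2.1) (generate (indepSet '' f))

variable {e} {f : Set (Set κ.out)}

theorem stageFilter_le_atTop : stageFilter e f ≤ atTop := inf_le_left.trans inf_le_left

theorem exists_of_mem_stageFilter {B : Set (Stage κ)} (hB : B ∈ stageFilter e f) :
    ∃ A : Set μ.out, A.Finite ∧ ∃ W ∈ generate (indepSet '' f),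
      ∀ᶠ ζ in atTop, (e ζ).1 ∉ A → (e ζ).2.1 ∈ W → ζ ∈ B := by
  obtain ⟨B₁, hB₁, B₂, ⟨W, hW, hWB₂⟩, hB₁₂⟩ := mem_inf_iff_superset.1 hB
  obtain ⟨T, hT, B₃, ⟨A, hA, hAB₃⟩, hTB₁⟩ := mem_inf_iff_superset.1 hB₁
  refine ⟨Aᶜ, hA, W, hW, mem_of_superset hT fun ζ hζ hζA hζW => hB₁₂ ⟨hTB₁ ⟨hζ, hAB₃ ?_⟩, hWB₂ hζW⟩⟩
  exact not_not.1 hζA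

theorem exists_fiber_ge (β : Stage κ) (α : μ.out) (y : Config κ.out) :
    ∃ ζ, β ≤ ζ ∧ (e ζ).1 = α ∧ (e ζ).2.1 = y := by
  have hinj : Function.Injective fun i => e.symm (α, y, i) := fun i j h => by simpa using h
  obtain ⟨_, ⟨i, rfl⟩, hζ⟩ := exists_ge_of_le_mk (by rw [mk_range_eq _ hinj, mk_out]) β
  exact ⟨_, hζ, by simp, by simp⟩

/-- Fewer than `μ` members of `stageFilter e f` meet: bound their tails (`μ ≤ cf κ`), pick a
`μ`-slice missed by none of them, and use the configuration `(∅, {∅})`, common to all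
`indepSet S`. -/
theorem nonempty_iInter_of_mem_stageFilter (hκ : ℵ₀ ≤ κ) (hμ : ℵ₀ ≤ μ) (hμcf : μ ≤ κ.ord.cof)
    {ι : Type u} (hι : #ι < μ) {B : ι → Set (Stage κ)} (hB : ∀ i, B i ∈ stageFilter e f) :
    (⋂ i, B i).Nonempty := by
  have := nonempty_stage hκ
  choose A hA W hW hev using fun i => exists_of_mem_stageFilter (hB i)
  choose β hβ using fun i => eventually_atTop.1 (hev i)
  obtain ⟨b, hb⟩ := exists_forall_le_of_mk_lt_cof (hι.trans_le hμcf) β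
  obtain ⟨α, hα⟩ : (⋃ i, A i)ᶜ.Nonempty := by
    by_contra! h
    have := mk_iUnion_finite_lt hμ hι hA
    rw [compl_empty_iff.1 h, mk_univ, mk_out] at this
    exact this.false
  have hW₀ (i) : ((∅, {∅}) : Config κ.out) ∈ W i :=
    (le_generate_iff.2 (by rintro _ ⟨S, -, rfl⟩; exact empty_mem_indepSet S) :
      pure ((∅, {∅}) : Config κ.out) ≤ _) (hW i)
  obtain ⟨ζ, hζ, h₁, h₂⟩ := exists_fiber_ge (e := e) b α (∅, {∅})
  refine ⟨ζ, mem_iInter.2 fun i => hβ i ζ ((hb i).trans hζ) ?_ (h₂ ▸ hW₀ i)⟩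
  exact h₁ ▸ fun h => hα (mem_iUnion.2 ⟨i, h⟩)

theorem preimage_indepSet_mem_stageFilter_iff (hκ : ℵ₀ ≤ κ) (hμ : ℵ₀ ≤ μ) {S : Set κ.out} :
    (fun ζ => (e ζ).2.1) ⁻¹' indepSet S ∈ stageFilter e f ↔ S ∈ f := by
  refine ⟨fun h => ?_, fun hS => mem_inf_of_right (preimage_mem_comap
    (indepSet_mem_generate_iff.2 hS))⟩
  have := nonempty_stage hκ
  have : Infinite μ.out := Cardinal.infinite_iff.2 (by rwa [mk_out])
  obtain ⟨A, hA, W, hW, hev⟩ := exists_of_mem_stageFilter h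
  obtain ⟨β, hβ⟩ := eventually_atTop.1 hev
  refine indepSet_mem_generate_iff.1 (mem_of_superset hW fun y hy => ?_)
  obtain ⟨α, hα⟩ := hA.infinite_compl.nonempty
  obtain ⟨ζ, hζ, h₁, h₂⟩ := exists_fiber_ge (e := e) β α y
  exact h₂ ▸ hβ ζ hζ (h₁ ▸ hα) (h₂ ▸ hy)

theorem stageFilter_injective (hκ : ℵ₀ ≤ κ) (hμ : ℵ₀ ≤ μ) : Function.Injective (stageFilter e) :=
  fun f f' h => Set.ext fun S => by
    rw [← preimage_indepSet_mem_stageFilter_iff hκ hμ, h,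
      preimage_indepSet_mem_stageFilter_iff hκ hμ]

theorem iInter_slice_compl_eq_empty : ⋂ α : μ.out, {ζ : Stage κ | (e ζ).1 ≠ α} = ∅ :=
  eq_empty_of_forall_notMem fun ζ hζ => mem_iInter.1 hζ (e ζ).1 rfl

theorem slice_compl_mem_stageFilter (α : μ.out) : {ζ : Stage κ | (e ζ).1 ≠ α} ∈ stageFilter e f :=
  mem_inf_of_left (mem_inf_of_right (preimage_mem_comap (finite_singleton α).compl_mem_cofinite))

end StageFilter

namespace GenericSeq

variable {G X : Type u} [Monoid G] [MulAction G X] {x₀ : X} {κ μ : Cardinal.{u}}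
  (C : GenericSeq G x₀ κ) (e : Stage κ ≃ μ.out × Config κ.out × κ.out)

theorem pseudocharacter_topology_stageFilter (hκ : ℵ₀ ≤ κ) (hμ : ℵ₀ ≤ μ) (hμcf : μ ≤ κ.ord.cof)
    (f : Set (Set κ.out)) : pseudocharacter (C.topology (stageFilter e f)) x₀ = μ := by
  refine pseudocharacter_eq (C.isClosed_singleton hκ stageFilter_le_atTop)
    (fun 𝒰 h𝒰 hinter => C.le_mk_of_sInter_eq hκ stageFilter_le_atTop
      (fun ι B hι hB => nonempty_iInter_of_mem_stageFilter hκ hμ hμcf hι hB) h𝒰 hinter) ?_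
  have : Nonempty μ.out := mk_ne_zero_iff.1 (by rw [mk_out]; exact (aleph0_pos.trans_le hμ).ne')
  obtain ⟨𝒰, h𝒰, hinter, hcard⟩ :=
    C.exists_sInter_eq slice_compl_mem_stageFilter (iInter_slice_compl_eq_empty (e := e))
  exact ⟨𝒰, h𝒰, hinter, hcard.trans (mk_out μ).le⟩

theorem topology_stageFilter_injective (hκ : ℵ₀ ≤ κ) (hμ : ℵ₀ ≤ μ) :
    Function.Injective fun f => C.topology (stageFilter e f) := fun _ _ h =>
  stageFilter_injective hκ hμ (C.topology_injOn hκ stageFilter_le_atTop stageFilter_le_atTop h)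

end GenericSeq

end ZariskiGTopology

open ZariskiGTopology in
/-- Let `G` be a monoid acting on a set `X`, `x₀ ∈ X`, and `κ` an infinite cardinal with
`|G| ≤ κ` such that every family `𝒰` of Zariski-open sets with `⋂ 𝒰 = {x₀}` has
cardinality at least `κ` (i.e. `κ ≤ ψ(x₀, ζ_G)`).  Then for every infinite cardinal
`μ ≤ cf(κ)`, the set of normal `G`-topologies on `X` with pseudocharacter `μ` at `x₀`
has cardinality at least `2^(2^κ)`. -/
theorem card_normal_GTopologies_ge {G X : Type u} [Monoid G] [MulAction G X]
    (x₀ : X) (κ : Cardinal.{u}) (hκ : ℵ₀ ≤ κ) (hG : #G ≤ κ)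
    (hψ : ∀ 𝒰 : Set (Set X), (∀ U ∈ 𝒰, IsOpen[zariskiGTopology G X] U) →
      ⋂₀ 𝒰 = {x₀} → κ ≤ #𝒰)
    (μ : Cardinal.{u}) (hμ : ℵ₀ ≤ μ) (hμcf : μ ≤ κ.ord.cof) :
    (2 : Cardinal.{u}) ^ ((2 : Cardinal.{u}) ^ κ) ≤
      #{τ : TopologicalSpace X |
        (∀ g : G, Continuous[τ, τ] fun x => g • x) ∧
        (∀ y : X, IsClosed[τ] {y}) ∧
        (∀ A B : Set X, IsClosed[τ] A → IsClosed[τ] B → Disjoint A B →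
          ∃ U V : Set X, IsOpen[τ] U ∧ IsOpen[τ] V ∧ A ⊆ U ∧ B ⊆ V ∧ Disjoint U V) ∧
        sInf {c : Cardinal.{u} | ∃ 𝒰 : Set (Set X),
          (∀ U ∈ 𝒰, IsOpen[τ] U ∧ x₀ ∈ U) ∧
          ⋂₀ 𝒰 = ⋂₀ {U : Set X | IsOpen[τ] U ∧ x₀ ∈ U} ∧ #𝒰 = c} = μ} := by
  obtain ⟨C⟩ := GenericSeq.nonempty hκ hG hψ
  obtain ⟨e⟩ := exists_stage_equiv hκ hμ (hμcf.trans (Ordinal.cof_ord_le κ))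
  calc (2 : Cardinal.{u}) ^ (2 : Cardinal.{u}) ^ κ = #(Set (Set κ.out)) := by
        rw [mk_set, mk_set, mk_out]
    _ = #(range fun f => C.topology (stageFilter e f)) :=
        (mk_range_eq _ (C.topology_stageFilter_injective e hκ hμ)).symm
    _ ≤ _ := mk_le_mk_of_subset <| by
      rintro _ ⟨f, rfl⟩
      exact ⟨C.continuous_smul hκ stageFilter_le_atTop,
        C.isClosed_singleton hκ stageFilter_le_atTop, fun _ _ hA hB hAB => C.normal hA hB hAB,
        C.pseudocharacter_topology_stageFilter e hκ hμ hμcf f⟩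
end

section
/- Let G be a countable monoid acting on a set X. Then the following conditions are equivalent: (1) X admits a non-discrete Hausdorff G-topology; (2) the Zariski G-topology ζ_G on X is not discrete (some subset of X is not ζ_G-open); (3) the set of non-discrete normal G-topologies on X has cardinality at least 2^(2^ℵ₀). -/
/-!
A Hausdorff `G`-topology contains every subbasic Zariski open set, since `{x | f • x ≠ g • x}` is
the preimage of the complement of the closed diagonal; and normal T₁ spaces are Hausdorff.

Conversely, enumerate `G = {e₀, e₁, …}` and take a point `z` that is not Zariski-isolated. Since
Zariski neighbourhoods of `z` are cut out by finitely many inequalities `f • y ≠ g • y`,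
`f • y ≠ c`, one can choose `xₙ ≠ z` so that every such inequality involving `eᵢ • z`
(`i ≤ n`) and earlier points `eⱼ • xₘ` that holds at `z` also holds at `xₙ`. For a free filter `p`
on `ℕ`, the finest `G`-topology with `g • xₙ → g • z` along `p` is T₁ and normal: two disjoint
closed sets are separated by their saturations under the moves `eᵢ • z ↦ eᵢ • xₙ`, which cannot
meet by genericity. This topology recovers `p` as `comap x (𝓝 z) ⊓ atTop`, and the suprema of
nonempty subfamilies of the `𝔠` pairwise almost disjoint branch filters of the binary tree are
`2^𝔠` distinct free filters.
-/

open Topology Cardinal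

universe u

open Filter Function

section Zariski

variable {G X : Type*} [Monoid G] [MulAction G X]

theorem isOpen_zariskiGTopology_smul_ne (f g : G) :
    IsOpen[zariskiGTopology G X] {x | f • x ≠ g • x} :=
  TopologicalSpace.isOpen_generateFrom_of_mem (Or.inl ⟨f, g, rfl⟩)

theorem isOpen_zariskiGTopology_smul_ne_const (f : G) (c : X) :
    IsOpen[zariskiGTopology G X] {x | f • x ≠ c} :=
  TopologicalSpace.isOpen_generateFrom_of_mem (Or.inr ⟨f, c, rfl⟩)

theorem le_zariskiGTopology [TopologicalSpace X] [T2Space X] [ContinuousConstSMul G X] :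
    ‹TopologicalSpace X› ≤ zariskiGTopology G X :=
  le_generateFrom <| by
    rintro _ (⟨f, g, rfl⟩ | ⟨f, c, rfl⟩)
    exacts [isOpen_ne_fun (continuous_const_smul f) (continuous_const_smul g),
      isOpen_ne.preimage (continuous_const_smul f)]

structure IsGenericSeq (e : ℕ → G) (z : X) (x : ℕ → X) : Prop where
  ne : ∀ n, x n ≠ z
  smul_ne_smul {n i j : ℕ} : i ≤ n → j ≤ n → e i • z ≠ e j • z → e i • x n ≠ e j • x n
  smul_ne_smul_of_lt {m n i j : ℕ} : m < n → i ≤ n → j ≤ m → e i • z ≠ e j • x m →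
    e i • x n ≠ e j • x m

theorem exists_isGenericSeq (e : ℕ → G) {z : X} (hz : ¬ IsOpen[zariskiGTopology G X] {z}) :
    ∃ x : ℕ → X, IsGenericSeq e z x := by
  let := zariskiGTopology G X
  have : (𝓝[≠] z).NeBot := ⟨mt (isOpen_singleton_iff_punctured_nhds z).2 hz⟩
  have smul_ne : ∀ {f g : G}, f • z ≠ g • z → ∀ᶠ y in 𝓝[≠] z, f • y ≠ g • y := fun h =>
    nhdsWithin_le_nhds ((isOpen_zariskiGTopology_smul_ne _ _).mem_nhds h)
  have smul_ne_const : ∀ {f : G} {c : X}, f • z ≠ c → ∀ᶠ y in 𝓝[≠] z, f • y ≠ c := fun h =>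
    nhdsWithin_le_nhds ((isOpen_zariskiGTopology_smul_ne_const _ _).mem_nhds h)
  have eventually_forall_le : ∀ {q : ℕ → X → Prop} (N : ℕ),
      (∀ i ≤ N, ∀ᶠ y in 𝓝[≠] z, q i y) → ∀ᶠ y in 𝓝[≠] z, ∀ i ≤ N, q i y :=
    fun N => (eventually_all_finite (Set.finite_Iic N)).2
  -- The terms of the sequence are chosen together with a stage `N` bounding the indices involved.
  let P : ℕ × X → Prop := fun a =>
    a.2 ≠ z ∧ ∀ i ≤ a.1, ∀ j ≤ a.1, e i • z ≠ e j • z → e i • a.2 ≠ e j • a.2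
  let r : ℕ × X → ℕ × X → Prop := fun b a =>
    b.1 < a.1 ∧ ∀ i ≤ a.1, ∀ j ≤ b.1, e i • z ≠ e j • b.2 → e i • a.2 ≠ e j • b.2
  obtain ⟨a, hP, hr⟩ := exists_seq_of_forall_finset_exists P r fun s _ => by
    set N := s.sup Prod.fst + 1
    have hN : ∀ b ∈ s, b.1 < N := fun b hb => Nat.lt_succ_of_le (Finset.le_sup hb)
    have : ∀ᶠ y in 𝓝[≠] z, P (N, y) ∧ ∀ b ∈ s, r b (N, y) :=
      (eventually_mem_nhdsWithin.and (eventually_forall_le N fun i _ => eventually_forall_le N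
        fun j _ => eventually_imp_distrib_left.2 smul_ne)).and
      ((eventually_all_finset s).2 fun b hb => (Eventually.of_forall fun _ => hN b hb).and
        (eventually_forall_le N fun i _ => eventually_forall_le b.1
          fun j _ => eventually_imp_distrib_left.2 smul_ne_const))
    obtain ⟨y, hy⟩ := this.exists
    exact ⟨(N, y), hy⟩
  have hle : ∀ n, n ≤ (a n).1 := StrictMono.id_le fun m n h => (hr m n h).1
  exact ⟨fun n => (a n).2, fun n => (hP n).1,
    fun hi hj h => (hP _).2 _ (hi.trans (hle _)) _ (hj.trans (hle _)) h,
    fun hmn hi hj h => (hr _ _ hmn).2 _ (hi.trans (hle _)) _ (hj.trans (hle _)) h⟩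

end Zariski

section SeqGTopology

variable {G X : Type*} [Monoid G] [MulAction G X]

-- The finest topology in which `g • x n → g • z` along `p` for every `g : G`.
def seqGTopology (G : Type*) [Monoid G] [MulAction G X] (z : X) (x : ℕ → X) (p : Filter ℕ) :
    TopologicalSpace X :=
  ⨆ g : G, nhdsAdjoint (g • z) (map (fun n => g • x n) p)

variable {e : ℕ → G} {z : X} {x : ℕ → X} {p : Filter ℕ}

theorem isOpen_seqGTopology_iff {U : Set X} :
    IsOpen[seqGTopology G z x p] U ↔ ∀ g : G, g • z ∈ U → ∀ᶠ n in p, g • x n ∈ U :=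
  isOpen_iSup_iff

theorem tendsto_seqGTopology (g : G) :
    Tendsto (fun n => g • x n) p (@nhds X (seqGTopology G z x p) (g • z)) :=
  (gc_nhds _ _ _).1 (le_iSup (fun g : G => nhdsAdjoint (g • z) (map (fun n => g • x n) p)) g)

theorem continuous_smul_seqGTopology (g : G) :
    Continuous[seqGTopology G z x p, seqGTopology G z x p] fun y => g • y :=
  continuous_def.2 fun U hU => isOpen_seqGTopology_iff.2 fun h hh => by
    simpa only [Set.mem_preimage, mul_smul] using
      isOpen_seqGTopology_iff.1 hU (g * h) (by rwa [mul_smul])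

theorem not_isOpen_singleton_seqGTopology [p.NeBot] (hx : ∀ n, x n ≠ z) :
    ¬ IsOpen[seqGTopology G z x p] {z} := fun h => by
  let := seqGTopology G z x p
  obtain ⟨n, hn⟩ :=
    ((tendsto_seqGTopology (G := G) 1).eventually (h.mem_nhds (one_smul G z))).exists
  rw [one_smul] at hn
  exact hx n hn

theorem IsGenericSeq.eventually_smul_ne (hx : IsGenericSeq e z x) {i : ℕ} {c : X}
    (h : e i • z ≠ c) : ∀ᶠ n in atTop, e i • x n ≠ c := by
  by_cases hc : ∃ m, i ≤ m ∧ e i • x m = c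
  · obtain ⟨m, him, rfl⟩ := hc
    filter_upwards [eventually_gt_atTop m] with n hn
    exact hx.smul_ne_smul_of_lt hn (by omega) him h
  · push Not at hc
    filter_upwards [eventually_ge_atTop i] with n hn using hc n hn

theorem IsGenericSeq.t1Space_seqGTopology (hx : IsGenericSeq e z x) (he : Surjective e)
    (hp : p ≤ atTop) : @T1Space X (seqGTopology G z x p) := by
  let := seqGTopology G z x p
  refine ⟨fun c => ⟨isOpen_seqGTopology_iff.2 fun g hg => ?_⟩⟩
  obtain ⟨i, rfl⟩ := he g
  exact hp (hx.eventually_smul_ne hg)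

inductive MemSaturation (e : ℕ → G) (z : X) (x : ℕ → X) (A : Set X) (ok : ℕ → ℕ → Prop) :
    X → Prop
  | of_mem {a : X} : a ∈ A → MemSaturation e z x A ok a
  | smul {i n : ℕ} : i ≤ n → ok i n → MemSaturation e z x A ok (e i • z) →
      MemSaturation e z x A ok (e i • x n)

theorem isOpen_setOf_memSaturation (he : Surjective e) (hp : p ≤ atTop) {A : Set X}
    {ok : ℕ → ℕ → Prop} (hok : ∀ i, MemSaturation e z x A ok (e i • z) → ∀ᶠ n in p, ok i n) :
    IsOpen[seqGTopology G z x p] {y | MemSaturation e z x A ok y} :=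
  isOpen_seqGTopology_iff.2 fun g hg => by
    obtain ⟨i, rfl⟩ := he g
    filter_upwards [hp (eventually_ge_atTop i), hok i hg] with n hin hn
    exact .smul hin hn hg

theorem IsGenericSeq.memSaturation_disjoint (hx : IsGenericSeq e z x) {A B : Set X}
    (hAB : Disjoint A B) {y : X} (hyA : MemSaturation e z x A (fun i n => e i • x n ∉ B) y)
    (hyB : MemSaturation e z x B (fun i n => e i • x n ∉ A) y) : False := by
  have not_mem_A : ∀ {w}, MemSaturation e z x B (fun i n => e i • x n ∉ A) w → w ∉ A := by
    intro w hw
    induction hw with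
    | of_mem hb => exact Set.disjoint_right.1 hAB hb
    | smul _ hok _ _ => exact hok
  induction hyA with
  | of_mem ha => exact not_mem_A hyB ha
  | @smul i n hin hnB hiz ih =>
    generalize hy : e i • x n = y at hyB
    induction hyB with
    | of_mem hb => exact hnB (hy ▸ hb)
    | @smul j m hjm hmA hjz ih' =>
      rcases lt_trichotomy n m with h | rfl | h
      · exact hx.smul_ne_smul_of_lt h hjm hin (fun h' => ih' h'.symm) hy.symm
      · exact hx.smul_ne_smul hin hjm (fun h' => ih (h' ▸ hjz)) hy
      · exact hx.smul_ne_smul_of_lt h hin hjm (fun h' => ih (h' ▸ .smul hjm hmA hjz)) hy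

theorem IsGenericSeq.normalSpace_seqGTopology (hx : IsGenericSeq e z x) (he : Surjective e)
    (hp : p ≤ atTop) : @NormalSpace X (seqGTopology G z x p) := by
  let := seqGTopology G z x p
  refine ⟨fun A B hA hB hAB => ?_⟩
  have hdisj : Disjoint {y | MemSaturation e z x A (fun i n => e i • x n ∉ B) y}
      {y | MemSaturation e z x B (fun i n => e i • x n ∉ A) y} :=
    Set.disjoint_left.2 fun y hyA hyB => hx.memSaturation_disjoint hAB hyA hyB
  refine ⟨_, _, isOpen_setOf_memSaturation he hp fun i hi => ?_,
    isOpen_setOf_memSaturation he hp fun i hi => ?_, fun a => .of_mem, fun b => .of_mem, hdisj⟩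
  · exact isOpen_seqGTopology_iff.1 hB.isOpen_compl (e i)
      fun hb => Set.disjoint_left.1 hdisj hi (.of_mem hb)
  · exact isOpen_seqGTopology_iff.1 hA.isOpen_compl (e i)
      fun ha => Set.disjoint_right.1 hdisj hi (.of_mem ha)

theorem IsGenericSeq.mem_of_memSaturation (hx : IsGenericSeq e z x) {i₁ : ℕ} (h₁ : e i₁ = 1)
    {S : Set ℕ} {n : ℕ} (hn : MemSaturation e z x {z} (fun _ m => m ∈ S) (x n)) (hi₁ : i₁ ≤ n) :
    n ∈ S := by
  generalize hy : x n = y at hn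
  induction hn generalizing n with
  | of_mem hz => exact absurd (hy.trans hz) (hx.ne n)
  | @smul i m him hmS hiz ih =>
    rcases lt_trichotomy n m with h | rfl | h
    · by_contra hnS
      refine hx.smul_ne_smul_of_lt h him hi₁ (fun h' => hnS (ih hi₁ ?_)) ?_
      · rw [h₁, one_smul] at h'
        exact h'.symm
      · rw [h₁, one_smul, hy]
    · exact hmS
    · refine (hx.smul_ne_smul_of_lt h hi₁ him (fun h' => hx.ne n ?_) ?_).elim
      · rw [h₁, one_smul, ← hy] at h'
        exact h'.symm
      · rwa [h₁, one_smul]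

theorem IsGenericSeq.comap_nhds_inf_atTop (hx : IsGenericSeq e z x) (he : Surjective e)
    (hp : p ≤ atTop) : comap x (@nhds X (seqGTopology G z x p) z) ⊓ atTop = p := by
  let := seqGTopology G z x p
  obtain ⟨i₁, h₁⟩ := he 1
  refine le_antisymm (fun S hS => ?_) (le_inf ?_ hp)
  · have hW : {y | MemSaturation e z x {z} (fun _ m => m ∈ S) y} ∈ 𝓝 z :=
      (isOpen_setOf_memSaturation he hp fun _ _ => hS).mem_nhds (.of_mem rfl)
    exact mem_of_superset (inter_mem_inf (preimage_mem_comap hW) (mem_atTop i₁))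
      fun n hn => hx.mem_of_memSaturation h₁ hn.1 hn.2
  · simpa only [one_smul] using
      (tendsto_seqGTopology (G := G) (z := z) (x := x) (p := p) 1).le_comap

end SeqGTopology

section BranchFilters

theorem Filter.mem_of_biSup_le_biSup {ι α : Type*} {B : ι → Filter α} [hB : ∀ i, (B i).NeBot]
    (hdisj : ∀ i, Disjoint (B i) (⨆ j ≠ i, B j)) {s t : Set ι}
    (h : ⨆ i ∈ s, B i ≤ ⨆ i ∈ t, B i) {i : ι} (hi : i ∈ s) : i ∈ t := by
  by_contra hit
  have : B i ≤ ⨆ j ≠ i, B j :=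
    (le_iSup₂ (f := fun j _ => B j) i hi).trans <| h.trans <|
      iSup₂_mono' fun j hj => ⟨j, ne_of_mem_of_not_mem hj hit, le_rfl⟩
  exact (hB i).ne (disjoint_self.1 ((hdisj i).mono_right this))

theorem Filter.biSup_injective_of_disjoint {ι α : Type*} {B : ι → Filter α}
    [∀ i, (B i).NeBot] (hdisj : ∀ i, Disjoint (B i) (⨆ j ≠ i, B j)) :
    Injective fun s : Set ι => ⨆ i ∈ s, B i := fun _ _ h =>
  Set.ext fun _ => ⟨mem_of_biSup_le_biSup hdisj h.le, mem_of_biSup_le_biSup hdisj h.ge⟩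

def branchCode (f : ℕ → Bool) (n : ℕ) : ℕ :=
  Encodable.encode ((List.range n).map f)

def branchFilter (f : ℕ → Bool) : Filter ℕ :=
  map (branchCode f) atTop

instance (f : ℕ → Bool) : (branchFilter f).NeBot := by
  unfold branchFilter
  infer_instance

theorem branchCode_injective (f : ℕ → Bool) : Injective (branchCode f) := fun m n h => by
  simpa using congrArg List.length (Encodable.encode_injective h)

theorem branchFilter_le_atTop (f : ℕ → Bool) : branchFilter f ≤ atTop := by
  rw [branchFilter, ← Tendsto, ← Nat.cofinite_eq_atTop]
  exact (branchCode_injective f).tendsto_cofinite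

theorem eventually_branchCode_notMem_range {f g : ℕ → Bool} (h : f ≠ g) :
    ∀ᶠ n in atTop, branchCode g n ∉ Set.range (branchCode f) := by
  obtain ⟨k, hk⟩ := Function.ne_iff.1 h
  filter_upwards [eventually_gt_atTop k] with n hn ⟨m, hm⟩
  have hfg := Encodable.encode_injective hm
  obtain rfl : m = n := by simpa using congrArg List.length hfg
  exact hk (List.map_inj_left.1 hfg k (List.mem_range.2 hn))

theorem disjoint_branchFilter_iSup (f : ℕ → Bool) :
    Disjoint (branchFilter f) (⨆ g ≠ f, branchFilter g) :=
  disjoint_of_disjoint_of_mem disjoint_compl_right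
    (range_mem_map : Set.range (branchCode f) ∈ branchFilter f)
    (mem_iSup.2 fun _ => mem_iSup.2 fun hg => eventually_branchCode_notMem_range hg.symm)

theorem mk_compl_singleton_empty_set :
    #({∅}ᶜ : Set (Set (ℕ → Bool))) = 2 ^ 𝔠 := by
  rw [mk_compl_of_infinite]
  · simp
  · simpa using (one_lt_aleph0.trans aleph0_lt_continuum).trans (cantor 𝔠)

end BranchFilters

section NormalGTopologies

variable {G : Type*} {X : Type u} [Monoid G] [MulAction G X]

def normalGTopologies (G X : Type*) [Monoid G] [MulAction G X] : Set (TopologicalSpace X) :=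
  {τ : TopologicalSpace X |
    (¬ ∀ U : Set X, IsOpen[τ] U) ∧
    (∀ g : G, Continuous[τ, τ] fun x => g • x) ∧
    (∀ y : X, IsClosed[τ] {y}) ∧
    (∀ A B : Set X, IsClosed[τ] A → IsClosed[τ] B → Disjoint A B →
      ∃ U V : Set X, IsOpen[τ] U ∧ IsOpen[τ] V ∧ A ⊆ U ∧ B ⊆ V ∧ Disjoint U V)}

theorem t2Space_of_mem_normalGTopologies {τ : TopologicalSpace X}
    (hτ : τ ∈ normalGTopologies G X) : @T2Space X τ :=
  have : T1Space X := ⟨hτ.2.2.1⟩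
  have : NormalSpace X := ⟨hτ.2.2.2⟩
  inferInstance

theorem IsGenericSeq.seqGTopology_mem_normalGTopologies {e : ℕ → G} {z : X} {x : ℕ → X}
    {p : Filter ℕ} [p.NeBot] (hx : IsGenericSeq e z x) (he : Surjective e) (hp : p ≤ atTop) :
    seqGTopology G z x p ∈ normalGTopologies G X :=
  ⟨fun h => not_isOpen_singleton_seqGTopology hx.ne (h {z}), continuous_smul_seqGTopology,
    (hx.t1Space_seqGTopology he hp).t1, (hx.normalSpace_seqGTopology he hp).normal⟩

theorem two_pow_continuum_le_mk_normalGTopologies [Countable G]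
    (hζ : ∃ U : Set X, ¬ IsOpen[zariskiGTopology G X] U) :
    lift.{u} (2 ^ 𝔠) ≤ #(normalGTopologies G X) := by
  obtain ⟨z, hz⟩ : ∃ z : X, ¬ IsOpen[zariskiGTopology G X] {z} := by
    let := zariskiGTopology G X
    rw [← not_forall, ← discreteTopology_iff_isOpen_singleton, discreteTopology_iff_forall_isOpen]
    exact not_forall.2 hζ
  obtain ⟨e, he⟩ := exists_surjective_nat G
  obtain ⟨x, hx⟩ := exists_isGenericSeq e hz
  let p (𝒜 : Set (ℕ → Bool)) : Filter ℕ := ⨆ f ∈ 𝒜, branchFilter f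
  have hp (𝒜 : Set (ℕ → Bool)) : p 𝒜 ≤ atTop := iSup₂_le fun f _ => branchFilter_le_atTop f
  have hp_neBot (𝒜 : ({∅}ᶜ : Set (Set (ℕ → Bool)))) : (p 𝒜).NeBot := by
    obtain ⟨f, hf⟩ := Set.nonempty_iff_ne_empty.2 𝒜.2
    exact NeBot.mono inferInstance (le_iSup₂ (f := fun f _ => branchFilter f) f hf)
  let Φ (𝒜 : ({∅}ᶜ : Set (Set (ℕ → Bool)))) : normalGTopologies G X :=
    ⟨seqGTopology G z x (p 𝒜), hx.seqGTopology_mem_normalGTopologies he (hp 𝒜)⟩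
  have hΦ : Injective Φ := fun 𝒜 ℬ h => Subtype.ext <|
    biSup_injective_of_disjoint disjoint_branchFilter_iSup <| show p 𝒜 = p ℬ by
      rw [← hx.comap_nhds_inf_atTop he (hp 𝒜), ← hx.comap_nhds_inf_atTop he (hp ℬ)]
      exact congrArg (fun τ => comap x (@nhds X τ z) ⊓ atTop) (congrArg Subtype.val h)
  simpa [mk_compl_singleton_empty_set] using lift_mk_le'.2 ⟨⟨Φ, hΦ⟩⟩

end NormalGTopologies

/-- Let `G` be a countable monoid acting on a set `X`.  The following are equivalent:
(1) `X` admits a non-discrete Hausdorff `G`-topology;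
(2) the Zariski `G`-topology on `X` is not discrete;
(3) the set of non-discrete normal `G`-topologies on `X` has cardinality at least
`2^(2^ℵ₀)`. -/
theorem GTopologizable_iff_zariski_not_discrete {G : Type*} {X : Type u}
    [Monoid G] [MulAction G X] [Countable G] :
    ((∃ τ : TopologicalSpace X, @T2Space X τ ∧
        (∀ g : G, Continuous[τ, τ] fun x => g • x) ∧
        ¬ ∀ U : Set X, IsOpen[τ] U) ↔
      (∃ U : Set X, ¬ IsOpen[zariskiGTopology G X] U)) ∧
    ((∃ U : Set X, ¬ IsOpen[zariskiGTopology G X] U) ↔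
      (2 : Cardinal.{u}) ^ ((2 : Cardinal.{u}) ^ (ℵ₀ : Cardinal.{u})) ≤
        #{τ : TopologicalSpace X |
          (¬ ∀ U : Set X, IsOpen[τ] U) ∧
          (∀ g : G, Continuous[τ, τ] fun x => g • x) ∧
          (∀ y : X, IsClosed[τ] {y}) ∧
          (∀ A B : Set X, IsClosed[τ] A → IsClosed[τ] B → Disjoint A B →
            ∃ U V : Set X, IsOpen[τ] U ∧ IsOpen[τ] V ∧ A ⊆ U ∧ B ⊆ V ∧ Disjoint U V)}) := by
  have one_imp_two : (∃ τ : TopologicalSpace X, @T2Space X τ ∧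
      (∀ g : G, Continuous[τ, τ] fun x => g • x) ∧ ¬ ∀ U : Set X, IsOpen[τ] U) →
      ∃ U : Set X, ¬ IsOpen[zariskiGTopology G X] U := by
    rintro ⟨τ, hT2, hcont, hτ⟩
    obtain ⟨U, hU⟩ := not_forall.1 hτ
    exact ⟨U, fun h => hU (h.mono (@le_zariskiGTopology G X _ _ τ hT2 ⟨hcont⟩))⟩
  have two_imp_three (h : ∃ U : Set X, ¬ IsOpen[zariskiGTopology G X] U) :
      (2 : Cardinal.{u}) ^ ((2 : Cardinal.{u}) ^ (ℵ₀ : Cardinal.{u})) ≤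
        #(normalGTopologies G X) := by
    simpa using two_pow_continuum_le_mk_normalGTopologies h
  have three_imp_one (h : (2 : Cardinal.{u}) ^ ((2 : Cardinal.{u}) ^ (ℵ₀ : Cardinal.{u})) ≤
      #(normalGTopologies G X)) : ∃ τ : TopologicalSpace X, @T2Space X τ ∧
        (∀ g : G, Continuous[τ, τ] fun x => g • x) ∧ ¬ ∀ U : Set X, IsOpen[τ] U := by
    obtain ⟨τ, hτ⟩ := mk_ne_zero_iff.1 (ne_bot_of_le_ne_bot (power_ne_zero _ two_ne_zero) h)
    exact ⟨τ, t2Space_of_mem_normalGTopologies hτ, hτ.2.1, hτ.1⟩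
  exact ⟨⟨one_imp_two, three_imp_one ∘ two_imp_three⟩, two_imp_three, one_imp_two ∘ three_imp_one⟩
end
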